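/- (Strong duality for discrete AOT) min over γ ∈ Γ_≤(μ,ν) of Σ_{i,j} c(i,j)γ(i,j) equals max over potentials φ : X → ℝ, ψ : Z → ℝ with φ(i) + ψ(j) ≤ c(i,j) for all (i,j), φ ≤ 0, and ψ ≤ 0, of Σ_i φ(i)μ(i) + Σ_j ψ(j)ν(j). -/

import Mathlib

/-!
Both optima are attained. Plans are bounded entrywise by `μ`, so the primal feasible set is
compact. For any `L ≤ 0` below every `c i j`, raising potentials to `max φ L`, `max ψ L` keeps
them dual feasible without lowering the dual value, so the dual may be maximised over a box.
Weak duality pairs `γ ≥ 0` with `φ i + ψ j ≤ c i j`.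

For the converse, the triples `(a, b, t)` for which some plan with marginals at most `a`, `b`
costs at most `t` form a closed convex cone; it is closed because such plans are bounded by `a`.
If the dual optimum `d` were below the primal one, `(μ, ν, d)` would lie outside this cone, and a
separating functional `(p, q, r)` is nonnegative on the cone and negative at `(μ, ν, d)`.
Testing it on the cone gives `p, q, r ≥ 0` and `p i + q j + r c i j ≥ 0`; as `μ, ν ≥ 0`, `r > 0`,
and `(-p / r, -q / r)` is a dual feasible pair of value greater than `d`.
-/

open Finset

def Feasible {n m : ℕ} (μ : Fin n → ℝ) (ν : Fin m → ℝ) (γ : Fin n → Fin m → ℝ) : Prop :=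
  (∀ i j, 0 ≤ γ i j) ∧ (∀ i, ∑ j, γ i j ≤ μ i) ∧ (∀ j, ∑ i, γ i j ≤ ν j)

def cost {n m : ℕ} (c : Fin n → Fin m → ℝ) (γ : Fin n → Fin m → ℝ) : ℝ :=
  ∑ i, ∑ j, c i j * γ i j

def Optimal {n m : ℕ} (c : Fin n → Fin m → ℝ) (μ : Fin n → ℝ) (ν : Fin m → ℝ)
    (γ : Fin n → Fin m → ℝ) : Prop :=
  Feasible μ ν γ ∧ ∀ γ2, Feasible μ ν γ2 → cost c γ ≤ cost c γ2

lemma LinearMap.apply_prod_eq_sum_single {ι κ : Type*} [Fintype ι] [DecidableEq ι] [Fintype κ]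
    [DecidableEq κ] (f : (ι → ℝ) × (κ → ℝ) × ℝ →ₗ[ℝ] ℝ) (a : ι → ℝ) (b : κ → ℝ) (t : ℝ) :
    f (a, b, t) = ∑ i, a i * f (Pi.single i 1, 0, 0) + ∑ j, b j * f (0, Pi.single j 1, 0)
      + t * f (0, 0, 1) := by
  have : (a, b, t) = ∑ i, a i • ((Pi.single i 1, 0, 0) : (ι → ℝ) × (κ → ℝ) × ℝ)
      + ∑ j, b j • ((0, Pi.single j 1, 0) : (ι → ℝ) × (κ → ℝ) × ℝ) + t • (0, 0, 1) := by
    ext <;> simp [Prod.fst_sum, Prod.snd_sum, Pi.single_apply]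
  conv_lhs => rw [this]
  simp only [map_add, map_sum, map_smul, smul_eq_mul]

variable {n m : ℕ}

section Primal

variable {μ μ' : Fin n → ℝ} {ν ν' : Fin m → ℝ} {γ γ' : Fin n → Fin m → ℝ}

lemma Feasible.le_left (h : Feasible μ ν γ) (i : Fin n) (j : Fin m) : γ i j ≤ μ i :=
  (single_le_sum (fun j' _ ↦ h.1 i j') (mem_univ j)).trans (h.2.1 i)

lemma feasible_zero (hμ : 0 ≤ μ) (hν : 0 ≤ ν) : Feasible μ ν 0 :=
  ⟨fun _ _ ↦ le_rfl, fun i ↦ by simpa using hμ i, fun j ↦ by simpa using hν j⟩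

lemma Feasible.add (h : Feasible μ ν γ) (h' : Feasible μ' ν' γ') :
    Feasible (μ + μ') (ν + ν') (γ + γ') :=
  ⟨fun i j ↦ add_nonneg (h.1 i j) (h'.1 i j),
    fun i ↦ by simpa [sum_add_distrib] using add_le_add (h.2.1 i) (h'.2.1 i),
    fun j ↦ by simpa [sum_add_distrib] using add_le_add (h.2.2 j) (h'.2.2 j)⟩

lemma Feasible.smul (h : Feasible μ ν γ) {a : ℝ} (ha : 0 ≤ a) :
    Feasible (a • μ) (a • ν) (a • γ) :=
  ⟨fun i j ↦ mul_nonneg ha (h.1 i j),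
    fun i ↦ by simpa [← mul_sum] using mul_le_mul_of_nonneg_left (h.2.1 i) ha,
    fun j ↦ by simpa [← mul_sum] using mul_le_mul_of_nonneg_left (h.2.2 j) ha⟩

lemma cost_add (c γ γ' : Fin n → Fin m → ℝ) : cost c (γ + γ') = cost c γ + cost c γ' := by
  simp [cost, mul_add, sum_add_distrib]

lemma cost_smul (c : Fin n → Fin m → ℝ) (a : ℝ) (γ : Fin n → Fin m → ℝ) :
    cost c (a • γ) = a * cost c γ := by
  simp [cost, mul_sum, mul_left_comm]

@[fun_prop]
lemma continuous_cost (c : Fin n → Fin m → ℝ) : Continuous (cost c) := by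
  unfold cost; fun_prop

lemma isClosed_setOf_feasible :
    IsClosed {p : (Fin n → ℝ) × (Fin m → ℝ) × (Fin n → Fin m → ℝ) | Feasible p.1 p.2.1 p.2.2} := by
  simp only [Feasible, Set.ofPred_and, Set.ofPred_forall]
  repeat' first
    | apply IsClosed.inter
    | refine isClosed_iInter fun _ ↦ ?_
    | apply isClosed_le
  all_goals fun_prop

lemma isCompact_setOf_feasible (μ : Fin n → ℝ) (ν : Fin m → ℝ) :
    IsCompact {γ | Feasible μ ν γ} :=
  isCompact_Icc.of_isClosed_subset
    (isClosed_setOf_feasible.preimage (f := fun γ ↦ (μ, ν, γ)) (by fun_prop))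
    fun _ h ↦ ⟨h.1, h.le_left⟩

lemma exists_optimal (c : Fin n → Fin m → ℝ) (hμ : 0 ≤ μ) (hν : 0 ≤ ν) :
    ∃ γ, Optimal c μ ν γ := by
  obtain ⟨γ, hγ, hmin⟩ := (isCompact_setOf_feasible μ ν).exists_isMinOn
    ⟨0, feasible_zero hμ hν⟩ (continuous_cost c).continuousOn
  exact ⟨γ, hγ, fun _ hγ' ↦ hmin hγ'⟩

end Primal

section Cone

variable {c : Fin n → Fin m → ℝ} {x : (Fin n → ℝ) × (Fin m → ℝ) × ℝ}

lemma isClosed_setOf_exists_feasible_cost_le (c : Fin n → Fin m → ℝ) :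
    IsClosed {x : (Fin n → ℝ) × (Fin m → ℝ) × ℝ |
      ∃ γ, Feasible x.1 x.2.1 γ ∧ cost c γ ≤ x.2.2} := by
  refine IsSeqClosed.isClosed fun x x₀ hx hlim ↦ ?_
  choose γ hγ using hx
  obtain ⟨B, hB⟩ := hlim.fst_nhds.bddAbove_range
  have hγB : ∀ k, γ k ∈ Set.Icc 0 fun i _ ↦ B i :=
    fun k ↦ ⟨(hγ k).1.1, fun i j ↦ ((hγ k).1.le_left i j).trans (hB ⟨k, rfl⟩ i)⟩
  obtain ⟨γ₀, -, σ, hσ, hγ₀⟩ := isCompact_Icc.tendsto_subseq hγB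
  have hxσ := hlim.comp hσ.tendsto_atTop
  refine ⟨γ₀, isClosed_setOf_feasible.mem_of_tendsto
    (hxσ.fst_nhds.prodMk_nhds (hxσ.snd_nhds.fst_nhds.prodMk_nhds hγ₀))
    (.of_forall fun k ↦ (hγ (σ k)).1), ?_⟩
  exact le_of_tendsto_of_tendsto' (((continuous_cost c).tendsto γ₀).comp hγ₀)
    hxσ.snd_nhds.snd_nhds fun k ↦ (hγ (σ k)).2

def feasibleCone (c : Fin n → Fin m → ℝ) : ProperCone ℝ ((Fin n → ℝ) × (Fin m → ℝ) × ℝ) where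
  carrier := {x | ∃ γ, Feasible x.1 x.2.1 γ ∧ cost c γ ≤ x.2.2}
  add_mem' := by
    rintro x y ⟨γ, hγ, hcost⟩ ⟨γ', hγ', hcost'⟩
    exact ⟨γ + γ', hγ.add hγ', by rw [cost_add]; exact add_le_add hcost hcost'⟩
  zero_mem' := ⟨0, feasible_zero le_rfl le_rfl, by simp [cost]⟩
  smul_mem' := by
    rintro a x ⟨γ, hγ, hcost⟩
    exact ⟨(a : ℝ) • γ, hγ.smul a.2, by
      rw [cost_smul]; exact mul_le_mul_of_nonneg_left hcost a.2⟩
  isClosed' := isClosed_setOf_exists_feasible_cost_le c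

lemma mem_feasibleCone_of_nonneg (hx : 0 ≤ x) : x ∈ feasibleCone c :=
  ⟨0, feasible_zero hx.1 hx.2.1, by simpa [cost] using hx.2.2⟩

lemma single_mem_feasibleCone (i : Fin n) (j : Fin m) :
    (Pi.single i 1, Pi.single j 1, c i j) ∈ feasibleCone c := by
  refine ⟨Pi.single i (Pi.single j 1), ⟨fun i' j' ↦ ?_, fun i' ↦ ?_, fun j' ↦ ?_⟩, ?_⟩
  · by_cases hi : i' = i <;> by_cases hj : j' = j <;> simp [hi, hj]
  · by_cases hi : i' = i <;> simp [hi]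
  · by_cases hj : j' = j <;> simp [Pi.single_apply, ite_apply, hj]
  · simp [cost, Pi.single_apply, ite_apply]

end Cone

def DualFeasible (c : Fin n → Fin m → ℝ) (φ : Fin n → ℝ) (ψ : Fin m → ℝ) : Prop :=
  (∀ i j, φ i + ψ j ≤ c i j) ∧ (∀ i, φ i ≤ 0) ∧ (∀ j, ψ j ≤ 0)

def dualValue (μ : Fin n → ℝ) (ν : Fin m → ℝ) (φ : Fin n → ℝ) (ψ : Fin m → ℝ) : ℝ :=
  ∑ i, φ i * μ i + ∑ j, ψ j * ν j

section Dual

variable {c : Fin n → Fin m → ℝ} {μ : Fin n → ℝ} {ν : Fin m → ℝ} {γ : Fin n → Fin m → ℝ}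
  {φ φ' : Fin n → ℝ} {ψ ψ' : Fin m → ℝ}

lemma Feasible.dualValue_le_cost (hγ : Feasible μ ν γ) (h : DualFeasible c φ ψ) :
    dualValue μ ν φ ψ ≤ cost c γ :=
  calc dualValue μ ν φ ψ
      ≤ ∑ i, φ i * ∑ j, γ i j + ∑ j, ψ j * ∑ i, γ i j :=
        add_le_add (sum_le_sum fun i _ ↦ mul_le_mul_of_nonpos_left (hγ.2.1 i) (h.2.1 i))
          (sum_le_sum fun j _ ↦ mul_le_mul_of_nonpos_left (hγ.2.2 j) (h.2.2 j))
    _ = ∑ i, ∑ j, (φ i + ψ j) * γ i j := by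
        simp only [mul_sum, add_mul, sum_add_distrib]
        rw [sum_comm (f := fun j i ↦ ψ j * γ i j)]
    _ ≤ cost c γ :=
        sum_le_sum fun i _ ↦ sum_le_sum fun j _ ↦ mul_le_mul_of_nonneg_right (h.1 i j) (hγ.1 i j)

lemma dualValue_mono (hμ : 0 ≤ μ) (hν : 0 ≤ ν) (hφ : φ ≤ φ') (hψ : ψ ≤ ψ') :
    dualValue μ ν φ ψ ≤ dualValue μ ν φ' ψ' :=
  add_le_add (sum_le_sum fun i _ ↦ mul_le_mul_of_nonneg_right (hφ i) (hμ i))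
    (sum_le_sum fun j _ ↦ mul_le_mul_of_nonneg_right (hψ j) (hν j))

lemma DualFeasible.max_const {L : ℝ} (h : DualFeasible c φ ψ) (hL : L ≤ 0)
    (hLc : ∀ i j, L ≤ c i j) :
    DualFeasible c (fun i ↦ max (φ i) L) (fun j ↦ max (ψ j) L) := by
  refine ⟨fun i j ↦ ?_, fun i ↦ max_le (h.2.1 i) hL, fun j ↦ max_le (h.2.2 j) hL⟩
  rcases le_total (φ i) L with hφ | hφ <;> rcases le_total (ψ j) L with hψ | hψ <;>
    simp only [max_eq_left, max_eq_right, hφ, hψ] <;>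
    linarith [h.1 i j, h.2.1 i, h.2.2 j, hLc i j]

lemma isClosed_setOf_dualFeasible (c : Fin n → Fin m → ℝ) :
    IsClosed {p : (Fin n → ℝ) × (Fin m → ℝ) | DualFeasible c p.1 p.2} := by
  simp only [DualFeasible, Set.ofPred_and, Set.ofPred_forall]
  repeat' first
    | apply IsClosed.inter
    | refine isClosed_iInter fun _ ↦ ?_
    | apply isClosed_le
  all_goals fun_prop

lemma exists_dualFeasible_isMax (c : Fin n → Fin m → ℝ) (hμ : 0 ≤ μ) (hν : 0 ≤ ν) :
    ∃ φ ψ, DualFeasible c φ ψ ∧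
      ∀ φ' ψ', DualFeasible c φ' ψ' → dualValue μ ν φ' ψ' ≤ dualValue μ ν φ ψ := by
  obtain ⟨L, hL, hLc⟩ : ∃ L ≤ (0 : ℝ), ∀ i j, L ≤ c i j := by
    obtain ⟨B, hB⟩ := (Set.finite_range fun p : Fin n × Fin m ↦ c p.1 p.2).bddBelow
    exact ⟨min 0 B, min_le_left _ _, fun i j ↦ (min_le_right _ _).trans (hB ⟨(i, j), rfl⟩)⟩
  have hK : IsCompact ({p | DualFeasible c p.1 p.2} ∩ Set.Icc (fun _ ↦ L, fun _ ↦ L) 0) :=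
    isCompact_Icc.inter_left (isClosed_setOf_dualFeasible c)
  have hcont : Continuous fun p : (Fin n → ℝ) × (Fin m → ℝ) ↦ dualValue μ ν p.1 p.2 := by
    unfold dualValue; fun_prop
  obtain ⟨⟨φ, ψ⟩, ⟨hfeas, -⟩, hmax⟩ := hK.exists_isMaxOn
    ⟨(fun _ ↦ L, fun _ ↦ L), ⟨fun i j ↦ by linarith [hLc i j], fun _ ↦ hL, fun _ ↦ hL⟩,
      le_rfl, fun _ ↦ hL, fun _ ↦ hL⟩ hcont.continuousOn
  refine ⟨φ, ψ, hfeas, fun φ' ψ' h ↦ ?_⟩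
  have hclamp := h.max_const hL hLc
  exact (dualValue_mono hμ hν (fun i ↦ le_max_left _ L) (fun j ↦ le_max_left _ L)).trans
    (isMaxOn_iff.mp hmax (_, _)
      ⟨hclamp, ⟨fun i ↦ le_max_right _ _, fun j ↦ le_max_right _ _⟩, hclamp.2.1, hclamp.2.2⟩)

lemma exists_dualFeasible_lt_dualValue (hμ : 0 ≤ μ) (hν : 0 ≤ ν) {t : ℝ}
    (h : (μ, ν, t) ∉ feasibleCone c) : ∃ φ ψ, DualFeasible c φ ψ ∧ t < dualValue μ ν φ ψ := by
  obtain ⟨f, hf, hft⟩ := (feasibleCone c).hyperplane_separation_point h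
  set p : Fin n → ℝ := fun i ↦ f (Pi.single i 1, 0, 0)
  set q : Fin m → ℝ := fun j ↦ f (0, Pi.single j 1, 0)
  set r := f (0, 0, 1)
  have hf_apply : ∀ a b s, f (a, b, s) = ∑ i, a i * p i + ∑ j, b j * q j + s * r :=
    (f : (Fin n → ℝ) × (Fin m → ℝ) × ℝ →ₗ[ℝ] ℝ).apply_prod_eq_sum_single
  have hp : ∀ i, 0 ≤ p i := fun i ↦ hf _ (mem_feasibleCone_of_nonneg
    ⟨Pi.single_nonneg.2 zero_le_one, le_rfl, le_rfl⟩)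
  have hq : ∀ j, 0 ≤ q j := fun j ↦ hf _ (mem_feasibleCone_of_nonneg
    ⟨le_rfl, Pi.single_nonneg.2 zero_le_one, le_rfl⟩)
  have hpqr : ∀ i j, 0 ≤ p i + q j + c i j * r := fun i j ↦ by
    simpa [hf_apply, Pi.single_apply] using hf _ (single_mem_feasibleCone (c := c) i j)
  rw [hf_apply] at hft
  have hr : 0 < r := by
    refine lt_of_le_of_ne (hf _ (mem_feasibleCone_of_nonneg ⟨le_rfl, le_rfl, zero_le_one⟩)) ?_
    rintro hr
    rw [← hr, mul_zero, add_zero] at hft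
    exact hft.not_ge (add_nonneg (sum_nonneg fun i _ ↦ mul_nonneg (hμ i) (hp i))
      (sum_nonneg fun j _ ↦ mul_nonneg (hν j) (hq j)))
  refine ⟨fun i ↦ -p i / r, fun j ↦ -q j / r, ⟨fun i j ↦ ?_, fun i ↦ ?_, fun j ↦ ?_⟩, ?_⟩
  · rw [← add_div, div_le_iff₀ hr]; linarith [hpqr i j]
  · exact div_nonpos_of_nonpos_of_nonneg (neg_nonpos.2 (hp i)) hr.le
  · exact div_nonpos_of_nonpos_of_nonneg (neg_nonpos.2 (hq j)) hr.le
  · have hval : dualValue μ ν (fun i ↦ -p i / r) (fun j ↦ -q j / r)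
        = -(∑ i, μ i * p i + ∑ j, ν j * q j) / r := by
      simp only [dualValue, neg_div, neg_mul, sum_neg_distrib, div_mul_eq_mul_div, ← sum_div,
        mul_comm (p _), mul_comm (q _)]
      ring
    rw [hval, lt_div_iff₀ hr]
    linarith

end Dual

theorem stmt_6 {n m : ℕ} (c : Fin n → Fin m → ℝ) (μ : Fin n → ℝ) (ν : Fin m → ℝ)
    (hμ : ∀ i, 0 ≤ μ i) (hν : ∀ j, 0 ≤ ν j) :
    ∃ v : ℝ,
      IsLeast {v | ∃ γ, Feasible μ ν γ ∧ cost c γ = v} v ∧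
      IsGreatest {v | ∃ (φ : Fin n → ℝ) (ψ : Fin m → ℝ),
        (∀ i j, φ i + ψ j ≤ c i j) ∧ (∀ i, φ i ≤ 0) ∧ (∀ j, ψ j ≤ 0) ∧
        ∑ i, φ i * μ i + ∑ j, ψ j * ν j = v} v := by
  obtain ⟨γ, hγ, hmin⟩ := exists_optimal c hμ hν
  obtain ⟨φ, ψ, hφψ, hmax⟩ := exists_dualFeasible_isMax c hμ hν
  have hgap : cost c γ ≤ dualValue μ ν φ ψ := by
    by_contra! hlt
    obtain ⟨φ', ψ', hφψ', hgt⟩ := exists_dualFeasible_lt_dualValue hμ hν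
      fun ⟨γ', hγ', hcost⟩ ↦ hlt.not_ge ((hmin γ' hγ').trans hcost)
    exact (hmax φ' ψ' hφψ').not_gt hgt
  refine ⟨cost c γ, ⟨⟨γ, hγ, rfl⟩, ?_⟩, ⟨⟨φ, ψ, hφψ.1, hφψ.2.1, hφψ.2.2,
    le_antisymm (hγ.dualValue_le_cost hφψ) hgap⟩, ?_⟩⟩
  · rintro v ⟨γ', hγ', rfl⟩
    exact hmin γ' hγ'
  · rintro v ⟨φ', ψ', h₁, h₂, h₃, rfl⟩
    exact hγ.dualValue_le_cost ⟨h₁, h₂, h₃⟩
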